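/- For all natural numbers n and k with k ≤ n, the number of pairs (ρ, D), where ρ is a set partition of an n-element set and D is a k-element subset of the set of blocks of ρ, equals ∑_{j=k}^{n} C(n,j) · S(j,k) · B(n−j), where C denotes the binomial coefficient. -/

import Mathlib

/-- The `n`-th Bell number: the number of set partitions of an `n`-element set. -/
noncomputable def bell (n : ℕ) : ℕ := Nat.card (Finpartition (Finset.univ : Finset (Fin n)))

/-- The Stirling number of the second kind `S(n,k)`. -/
noncomputable def stirling (n k : ℕ) : ℕ :=
  Nat.card {P : Finpartition (Finset.univ : Finset (Fin n)) // P.parts.card = k}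

open Finset

section Aux

variable {α : Type*} [DecidableEq α]

/-- Partitions of `s` correspond to partitions of the universe of the subtype of `s`. -/
def finpartitionSubtypeEquiv (s : Finset α) :
    Finpartition (Finset.univ : Finset {x // x ∈ s}) ≃ Finpartition s where
  toFun P :=
    { parts := P.parts.map (Finset.mapEmbedding (Function.Embedding.subtype _)).toEmbedding
      supIndep := by
        rw [Finset.supIndep_iff_pairwiseDisjoint]
        rintro a ha b hb hab
        rw [Finset.mem_coe, Finset.mem_map] at ha hb
        simp only [RelEmbedding.coe_toEmbedding, Finset.mapEmbedding_apply] at ha hb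
        obtain ⟨u, hu, rfl⟩ := ha
        obtain ⟨v, hv, rfl⟩ := hb
        have huv : u ≠ v := fun h => hab (by rw [h])
        have := P.supIndep.pairwiseDisjoint hu hv huv
        simp only [Function.onFun, id_eq, Finset.disjoint_map] at this ⊢
        exact this
      sup_parts := by
        ext x
        simp only [Finset.mem_sup, mem_map, RelEmbedding.coe_toEmbedding,
          Finset.mapEmbedding_apply, id_eq]
        constructor
        · rintro ⟨t, ht, hx⟩
          obtain ⟨u, hu, rfl⟩ := ht
          simp only [mem_map, Function.Embedding.coe_subtype] at hx
          obtain ⟨a, ha, rfl⟩ := hx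
          exact a.2
        · intro hx
          obtain ⟨t, ht, hxt⟩ := P.exists_mem (mem_univ (⟨x, hx⟩ : {x // x ∈ s}))
          exact ⟨t.map (Function.Embedding.subtype _), ⟨t, ht, rfl⟩,
            mem_map.2 ⟨⟨x, hx⟩, hxt, rfl⟩⟩
      bot_notMem := by
        simp only [bot_eq_empty, mem_map, RelEmbedding.coe_toEmbedding,
          Finset.mapEmbedding_apply]
        rintro ⟨t, ht, h⟩
        rw [Finset.map_eq_empty] at h
        rw [h] at ht
        simpa using P.bot_notMem ht }
  invFun Q :=
    { parts := Q.parts.image (fun t => t.subtype (· ∈ s))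
      supIndep := by
        rw [Finset.supIndep_iff_pairwiseDisjoint]
        rintro a ha b hb hab
        rw [Finset.mem_coe, Finset.mem_image] at ha hb
        obtain ⟨u, hu, rfl⟩ := ha
        obtain ⟨v, hv, rfl⟩ := hb
        have huv : u ≠ v := fun h => hab (by rw [h])
        have := Q.supIndep.pairwiseDisjoint hu hv huv
        simp only [Function.onFun, id_eq] at this ⊢
        rw [Finset.disjoint_left] at this ⊢
        intro x hx hx'
        rw [Finset.mem_subtype] at hx hx'
        exact this hx hx'
      sup_parts := by
        ext x
        simp only [Finset.mem_sup, mem_image, id_eq, mem_univ, iff_true]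
        obtain ⟨t, ht, hxt⟩ := Q.exists_mem x.2
        exact ⟨t.subtype _, ⟨t, ht, rfl⟩, Finset.mem_subtype.2 hxt⟩
      bot_notMem := by
        simp only [bot_eq_empty, mem_image]
        rintro ⟨t, ht, h⟩
        have : t = ∅ := by
          have := Finset.subtype_map_of_mem (fun x hx => Q.le ht hx)
          rw [h, Finset.map_empty] at this
          exact this.symm
        rw [this] at ht
        simpa using Q.bot_notMem ht }
  left_inv P := by
    apply Finpartition.ext
    ext t
    simp only [mem_image, mem_map, RelEmbedding.coe_toEmbedding, Finset.mapEmbedding_apply]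
    constructor
    · rintro ⟨u, ⟨v, hv, rfl⟩, rfl⟩
      have : (Finset.map (Function.Embedding.subtype _) v).subtype (· ∈ s) = v := by
        ext x
        simp [Finset.mem_subtype]
      rwa [this]
    · intro ht
      refine ⟨t.map (Function.Embedding.subtype _), ⟨t, ht, rfl⟩, ?_⟩
      ext x
      simp [Finset.mem_subtype]
  right_inv Q := by
    apply Finpartition.ext
    ext t
    simp only [mem_map, mem_image, RelEmbedding.coe_toEmbedding, Finset.mapEmbedding_apply]
    constructor
    · rintro ⟨u, ⟨v, hv, rfl⟩, rfl⟩
      rwa [Finset.subtype_map_of_mem (fun x hx => Q.le hv hx)]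
    · intro ht
      exact ⟨t.subtype _, ⟨t, ht, rfl⟩, Finset.subtype_map_of_mem (fun x hx => Q.le ht hx)⟩
variable {α β : Type*} [DecidableEq α] [DecidableEq β]

/-- Order isomorphism of finsets induced by a type equivalence. -/
def finsetOrderIso (e : α ≃ β) : Finset α ≃o Finset β where
  toEquiv := e.finsetCongr
  map_rel_iff' := by
    intro s t
    simp only [Equiv.finsetCongr_apply]
    exact Finset.map_subset_map

noncomputable def finpartitionCongr [Fintype α] [Fintype β] (e : α ≃ β) :
    Finpartition (Finset.univ : Finset α) ≃ Finpartition (Finset.univ : Finset β) where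
  toFun P := (P.map (finsetOrderIso e)).copy (Finset.map_univ_equiv e)
  invFun Q := (Q.map (finsetOrderIso e.symm)).copy (Finset.map_univ_equiv e.symm)
  left_inv P := by
    apply Finpartition.ext
    simp only [Finpartition.copy_parts, Finpartition.parts_map]
    show Finset.map _ (Finset.map _ P.parts) = P.parts
    rw [Finset.map_map]
    convert Finset.map_refl
    ext t x
    simp [finsetOrderIso]
  right_inv Q := by
    apply Finpartition.ext
    simp only [Finpartition.copy_parts, Finpartition.parts_map]
    show Finset.map _ (Finset.map _ Q.parts) = Q.parts
    rw [Finset.map_map]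
    convert Finset.map_refl
    ext t x
    simp [finsetOrderIso]

@[simp] lemma finpartitionCongr_parts_card [Fintype α] [Fintype β] (e : α ≃ β)
    (P : Finpartition (Finset.univ : Finset α)) :
    ((finpartitionCongr e) P).parts.card = P.parts.card := by
  simp [finpartitionCongr, Finpartition.copy]
noncomputable def finpartitionFinEquiv {α : Type*} [DecidableEq α] (s : Finset α) :
    Finpartition s ≃ Finpartition (Finset.univ : Finset (Fin s.card)) :=
  (finpartitionSubtypeEquiv s).symm.trans (finpartitionCongr s.equivFin)

lemma finpartitionSubtypeEquiv_parts_card {α : Type*} [DecidableEq α] (s : Finset α)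
    (P : Finpartition (Finset.univ : Finset {x // x ∈ s})) :
    ((finpartitionSubtypeEquiv s) P).parts.card = P.parts.card := by
  simp [finpartitionSubtypeEquiv]
  exact Finset.card_map _

lemma finpartitionFinEquiv_parts_card {α : Type*} [DecidableEq α] (s : Finset α)
    (P : Finpartition s) :
    ((finpartitionFinEquiv s) P).parts.card = P.parts.card := by
  simp only [finpartitionFinEquiv, Equiv.trans_apply, finpartitionCongr_parts_card]
  conv_rhs => rw [← (finpartitionSubtypeEquiv s).apply_symm_apply P]
  rw [finpartitionSubtypeEquiv_parts_card]

lemma nat_card_finpartition {α : Type*} [DecidableEq α] (s : Finset α) :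
    Nat.card (Finpartition s) = bell s.card :=
  Nat.card_congr (finpartitionFinEquiv s)

lemma nat_card_finpartition_k {α : Type*} [DecidableEq α] (s : Finset α) (k : ℕ) :
    Nat.card {P : Finpartition s // P.parts.card = k} = stirling s.card k :=
  Nat.card_congr <| Equiv.subtypeEquiv (finpartitionFinEquiv s) fun P => by
    rw [finpartitionFinEquiv_parts_card]

lemma stirling_eq_zero {j k : ℕ} (h : j < k) : stirling j k = 0 := by
  have : IsEmpty {P : Finpartition (Finset.univ : Finset (Fin j)) // P.parts.card = k} := by
    refine ⟨fun ⟨P, hP⟩ => ?_⟩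
    have := P.card_parts_le_card
    rw [hP, Finset.card_univ, Fintype.card_fin] at this
    omega
  simp [stirling, Nat.card_of_isEmpty]

variable {α : Type*} [DecidableEq α] [Fintype α]

/-- Glue a partition of `A` and a partition of `Aᶜ` into a partition of `univ`. -/
def unionFinpartition {A : Finset α} (P : Finpartition A) (Q : Finpartition Aᶜ) :
    Finpartition (Finset.univ : Finset α) where
  parts := P.parts ∪ Q.parts
  supIndep := by
    rw [Finset.supIndep_iff_pairwiseDisjoint]
    rintro a ha b hb hab
    rw [Finset.mem_coe, Finset.mem_union] at ha hb
    simp only [Function.onFun, id_eq]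
    rcases ha with ha | ha <;> rcases hb with hb | hb
    · exact P.supIndep.pairwiseDisjoint ha hb hab
    · exact ((@disjoint_compl_right (Finset α) _ A).mono (P.le ha) (Q.le hb))
    · exact ((@disjoint_compl_right (Finset α) _ A).mono (P.le hb) (Q.le ha)).symm
    · exact Q.supIndep.pairwiseDisjoint ha hb hab
  sup_parts := by
    rw [Finset.sup_union, P.sup_parts, Q.sup_parts]
    simp [Finset.union_compl]
  bot_notMem := by
    rw [Finset.mem_union]
    rintro (h | h)
    · exact P.bot_notMem h
    · exact Q.bot_notMem h

lemma parts_disjoint {A : Finset α} (P : Finpartition A) (Q : Finpartition Aᶜ) :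
    Disjoint P.parts Q.parts := by
  rw [Finset.disjoint_left]
  intro t htP htQ
  have h1 : t ⊆ A := P.le htP
  have h2 : t ⊆ Aᶜ := Q.le htQ
  have : t = ∅ := by
    rw [← Finset.subset_empty]
    intro x hx
    exact absurd (h2 hx) (by simp [Finset.mem_compl.mp, h1 hx])
  rw [this] at htP
  simpa using P.bot_notMem htP

lemma sup_sdiff_eq_compl (ρ : Finpartition (Finset.univ : Finset α))
    {D : Finset (Finset α)} (hD : D ⊆ ρ.parts) :
    (ρ.parts \ D).sup id = (D.sup id)ᶜ := by
  ext x
  simp only [Finset.mem_sup, Finset.mem_sdiff, id_eq, Finset.mem_compl]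
  constructor
  · rintro ⟨t, ⟨ht, htD⟩, hx⟩ ⟨u, hu, hxu⟩
    exact htD (ρ.eq_of_mem_parts ht (hD hu) hx hxu ▸ hu)
  · intro h
    obtain ⟨t, ht, hxt⟩ := ρ.exists_mem (Finset.mem_univ x)
    exact ⟨t, ⟨ht, fun htD => h ⟨t, htD, hxt⟩⟩, hxt⟩

/-- The fiber of pairs `(ρ, D)` with `D.sup id = A`. -/
noncomputable def fiberEquiv (k : ℕ) (A : Finset α) :
    {x : {p : Finpartition (Finset.univ : Finset α) × Finset (Finset α) //
        p.2 ⊆ p.1.parts ∧ p.2.card = k} // x.1.2.sup id = A}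
      ≃ {P : Finpartition A // P.parts.card = k} × Finpartition (Aᶜ : Finset α) where
  toFun x :=
    (⟨x.1.1.1.ofSubset x.1.2.1 x.2, by simpa using x.1.2.2⟩,
      x.1.1.1.ofSubset (Finset.sdiff_subset (s := x.1.1.1.parts) (t := x.1.1.2))
        (by rw [sup_sdiff_eq_compl x.1.1.1 x.1.2.1, x.2]))
  invFun y :=
    ⟨⟨(unionFinpartition y.1.1 y.2, y.1.1.parts),
      ⟨Finset.subset_union_left, y.1.2⟩⟩, y.1.1.sup_parts⟩
  left_inv x := by
    obtain ⟨⟨⟨ρ, D⟩, hD, hk⟩, hA⟩ := x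
    apply Subtype.ext
    apply Subtype.ext
    apply Prod.ext
    · apply Finpartition.ext
      simp only [unionFinpartition, Finpartition.ofSubset_parts]
      exact Finset.union_sdiff_of_subset hD
    · rfl
  right_inv y := by
    obtain ⟨⟨P, hP⟩, Q⟩ := y
    apply Prod.ext
    · apply Subtype.ext
      apply Finpartition.ext
      simp [unionFinpartition, Finpartition.ofSubset_parts]
    · apply Finpartition.ext
      simp only [unionFinpartition, Finpartition.ofSubset_parts]
      exact Finset.union_sdiff_cancel_left (parts_disjoint P Q)
end Aux

/-- The number of pairs `(ρ, D)` of a set partition `ρ` of an `n`-element set together with a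
`k`-element subset `D` of its set of blocks equals
`∑_{j=k}^{n} C(n,j) · S(j,k) · B(n−j)`. -/
theorem stmt1 (n k : ℕ) (hk : k ≤ n) :
    Nat.card {p : Finpartition (Finset.univ : Finset (Fin n)) × Finset (Finset (Fin n)) //
        p.2 ⊆ p.1.parts ∧ p.2.card = k}
      = ∑ j ∈ Finset.Icc k n, n.choose j * stirling j k * bell (n - j) := by
  classical
  set S := {p : Finpartition (Finset.univ : Finset (Fin n)) × Finset (Finset (Fin n)) //
      p.2 ⊆ p.1.parts ∧ p.2.card = k} with hS
  have key : ∀ A : Finset (Fin n), Nat.card {x : S // x.1.2.sup id = A}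
      = stirling A.card k * bell (n - A.card) := by
    intro A
    rw [Nat.card_congr (fiberEquiv k A), Nat.card_prod, nat_card_finpartition_k,
      nat_card_finpartition, Finset.card_compl, Fintype.card_fin]
  calc Nat.card S
      = Nat.card (Σ A : Finset (Fin n), {x : S // x.1.2.sup id = A}) :=
        (Nat.card_congr (Equiv.sigmaFiberEquiv (fun x : S => x.1.2.sup id))).symm
    _ = ∑ A : Finset (Fin n), Nat.card {x : S // x.1.2.sup id = A} := by
        rw [Nat.card_eq_fintype_card, Fintype.card_sigma]
        exact Finset.sum_congr rfl fun A _ => (Nat.card_eq_fintype_card).symm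
    _ = ∑ A : Finset (Fin n), stirling A.card k * bell (n - A.card) :=
        Finset.sum_congr rfl fun A _ => key A
    _ = ∑ j ∈ Finset.range (n + 1), n.choose j • (stirling j k * bell (n - j)) := by
        rw [← Finset.powerset_univ, Finset.sum_powerset]
        rw [Finset.card_univ, Fintype.card_fin]
        exact Finset.sum_congr rfl fun j _ =>
          Finset.sum_powersetCard j Finset.univ (fun m => stirling m k * bell (n - m)) |>.trans
            (by rw [Finset.card_univ, Fintype.card_fin])
    _ = ∑ j ∈ Finset.Icc k n, n.choose j * stirling j k * bell (n - j) := by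
        have hsub : Finset.Icc k n ⊆ Finset.range (n + 1) := fun j hj => by
          rw [Finset.mem_Icc] at hj; exact Finset.mem_range.2 (by omega)
        have hzero : ∀ j ∈ Finset.range (n + 1), j ∉ Finset.Icc k n →
            n.choose j • (stirling j k * bell (n - j)) = 0 := by
          intro j hj hj'
          rw [Finset.mem_range] at hj
          rw [Finset.mem_Icc] at hj'
          have : j < k := by omega
          simp [stirling_eq_zero this]
        rw [← Finset.sum_subset hsub hzero]
        exact Finset.sum_congr rfl fun j _ => by rw [smul_eq_mul, mul_assoc]
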